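/- Let O be an open subset of ℝ^d, let 𝒜 be a real Banach space, and let u : O → 𝒜 be analytic on O. Then for every compact set K ⊂ O there exists A₁ > 0 such that for every multi-index α ∈ ℕ^d and every x ∈ K, ‖(∂^α u)(x)‖_𝒜 ≤ A₁^{|α|+1} · (α!). -/

import Mathlib

open scoped Nat

/-- Partial derivative in the `j`-th coordinate direction. -/
noncomputable def pd {d : ℕ} {A : Type*} [NormedAddCommGroup A] [NormedSpace ℝ A]
    (j : Fin d) (f : EuclideanSpace ℝ (Fin d) → A) : EuclideanSpace ℝ (Fin d) → A :=
  fun y => fderiv ℝ f y (EuclideanSpace.single j 1)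

/-- Iterated partial derivative `∂^α = ∂₁^{α₁} ⋯ ∂_d^{α_d}`. -/
noncomputable def mpd {d : ℕ} {A : Type*} [NormedAddCommGroup A] [NormedSpace ℝ A]
    (α : Fin d → ℕ) (f : EuclideanSpace ℝ (Fin d) → A) : EuclideanSpace ℝ (Fin d) → A :=
  (List.finRange d).foldr (fun j g => (pd j)^[α j] g) f

/-!
Near a point of `K` the function `u` is the sum of a power series whose coefficients satisfy
`‖p n‖ ≤ C ρ⁻ⁿ`. Differentiating `k` times along unit vectors multiplies the `n`-th coefficient
by at most `(n + k)! / n! ≤ 2^(n+k) k!`, so on the ball of radius `ρ / 4` every such derivative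
is bounded by `2C (2/ρ)^k k!`. Compactness makes the constant uniform on `K`, and the
multinomial bound `|α|! ≤ d^|α| α!` trades `|α|!` for `α!`.
-/

open Finset Filter Topology
open scoped NNReal ENNReal

theorem Nat.multinomial_le_card_pow {ι : Type*} (s : Finset ι) (f : ι → ℕ) :
    Nat.multinomial s f ≤ #s ^ (∑ i ∈ s, f i) := by
  classical
  set g : ι → ℕ := fun i => if i ∈ s then f i else 0
  have hfg : ∀ i ∈ s, f i = g i := fun i hi => (if_pos hi).symm
  have hg : g ∈ piAntidiag s (∑ i ∈ s, f i) :=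
    mem_piAntidiag.2 ⟨(sum_congr rfl hfg).symm, fun i hi => by by_contra h; simp [g, h] at hi⟩
  have multinomial_thm := sum_pow_eq_sum_piAntidiag s (fun _ => (1 : ℕ)) (∑ i ∈ s, f i)
  simp only [sum_const, smul_eq_mul, mul_one, one_pow, prod_const_one] at multinomial_thm
  rw [multinomial_thm, Nat.multinomial_congr hfg]
  exact single_le_sum (f := fun k => Nat.multinomial s k) (fun _ _ => Nat.zero_le _) hg

theorem Nat.factorial_sum_le_card_pow_mul_prod_factorial {ι : Type*} (s : Finset ι)
    (f : ι → ℕ) : (∑ i ∈ s, f i)! ≤ #s ^ (∑ i ∈ s, f i) * ∏ i ∈ s, (f i)! := by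
  rw [← Nat.multinomial_spec, mul_comm]
  exact Nat.mul_le_mul_right _ (Nat.multinomial_le_card_pow s f)

theorem Nat.add_descFactorial_le (n k : ℕ) : (n + k).descFactorial k ≤ 2 ^ (n + k) * k ! := by
  rw [Nat.descFactorial_eq_factorial_mul_choose, mul_comm]
  exact Nat.mul_le_mul_right _ ((n + k).choose_le_two_pow k)

theorem IsCompact.exists_forall_le_pow_mul {X ι : Type*} [TopologicalSpace X] {K : Set X}
    (hK : IsCompact K) (g : ι → X → ℝ) (m : ι → ℕ) (c : ι → ℝ) (hc : ∀ i, 0 ≤ c i)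
    (hloc : ∀ x ∈ K, ∃ t ∈ 𝓝 x, ∃ B > 0, ∀ i, ∀ y ∈ t, g i y ≤ B ^ m i * c i) :
    ∃ B > 0, ∀ i, ∀ y ∈ K, g i y ≤ B ^ m i * c i := by
  refine hK.induction_on ⟨1, one_pos, by simp⟩ ?_ ?_ ?_
  · exact fun s t hst ⟨B, hB, h⟩ => ⟨B, hB, fun i y hy => h i y (hst hy)⟩
  · rintro s t ⟨B, hB, hs⟩ ⟨B', hB', ht⟩
    have mono : ∀ b, 0 < b → b ≤ max B B' → ∀ i, b ^ m i * c i ≤ max B B' ^ m i * c i :=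
      fun b hb hb' i => mul_le_mul_of_nonneg_right (pow_le_pow_left₀ hb.le hb' _) (hc i)
    refine ⟨max B B', lt_max_of_lt_left hB, fun i y hy => ?_⟩
    rcases hy with hy | hy
    · exact (hs i y hy).trans (mono B hB (le_max_left _ _) i)
    · exact (ht i y hy).trans (mono B' hB' (le_max_right _ _) i)
  · intro x hx
    obtain ⟨t, ht, h⟩ := hloc x hx
    exact ⟨t, mem_nhdsWithin_of_mem_nhds ht, h⟩

section IteratedDirDeriv

variable {𝕜 E F : Type*} [NontriviallyNormedField 𝕜] [NormedAddCommGroup E] [NormedSpace 𝕜 E]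
  [NormedAddCommGroup F] [NormedSpace 𝕜 F]

theorem FormalMultilinearSeries.norm_derivSeries_le (p : FormalMultilinearSeries 𝕜 E F)
    (n : ℕ) : ‖p.derivSeries n‖ ≤ (n + 1) * ‖p (n + 1)‖ :=
  calc ‖p.derivSeries n‖ ≤ ‖p.changeOriginSeries 1 n‖ := by
        refine (ContinuousLinearMap.norm_compContinuousMultilinearMap_le _ _).trans ?_
        exact mul_le_of_le_one_left (norm_nonneg _)
          (ContinuousLinearMap.opNorm_le_bound _ zero_le_one (by simp))
    _ ≤ ∑ _s : {s : Finset (Fin (1 + n)) // #s = n}, ‖p (1 + n)‖ := by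
        rw [changeOriginSeries]
        refine le_trans
          (norm_sum_le (univ : Finset {s : Finset (Fin (1 + n)) // #s = n})
            (fun s => p.changeOriginSeriesTerm 1 n s.1 s.2)) (le_of_eq ?_)
        exact sum_congr rfl fun s _ => p.norm_changeOriginSeriesTerm 1 n s.1 s.2
    _ = (n + 1) * ‖p (n + 1)‖ := by
        rw [sum_const, card_univ, Fintype.card_finset_len, Fintype.card_fin, nsmul_eq_mul,
          add_comm 1 n, Nat.choose_succ_self_right, Nat.cast_add_one]

theorem ContinuousLinearMap.norm_apply_le (v : E) : ‖ContinuousLinearMap.apply 𝕜 F v‖ ≤ ‖v‖ :=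
  ContinuousLinearMap.opNorm_le_bound _ (norm_nonneg v) fun L => by
    simpa [mul_comm] using L.le_opNorm v

variable (𝕜) in
noncomputable def iteratedDirDeriv (L : List E) (f : E → F) : E → F :=
  L.foldr (fun v g y => fderiv 𝕜 g y v) f

theorem HasFPowerSeriesOnBall.exists_iteratedDirDeriv [CompleteSpace F] {f : E → F}
    {p : FormalMultilinearSeries 𝕜 E F} {x : E} {r : ℝ≥0∞} (h : HasFPowerSeriesOnBall f p x r) :
    ∀ L : List E, (∀ v ∈ L, ‖v‖ ≤ 1) →
      ∃ q : FormalMultilinearSeries 𝕜 E F, HasFPowerSeriesOnBall (iteratedDirDeriv 𝕜 L f) q x r ∧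
        ∀ n, ‖q n‖ ≤ (n + L.length).descFactorial L.length * ‖p (n + L.length)‖
  | [], _ => ⟨p, h, by simp⟩
  | v :: L, hL => by
    obtain ⟨q, hq, hq_le⟩ := h.exists_iteratedDirDeriv L fun w hw => hL w (.tail v hw)
    set apply_v := ContinuousLinearMap.apply 𝕜 F v
    refine ⟨apply_v.compFormalMultilinearSeries q.derivSeries,
      apply_v.comp_hasFPowerSeriesOnBall hq.fderiv, fun n => ?_⟩
    have hv : ‖apply_v‖ ≤ 1 := (ContinuousLinearMap.norm_apply_le v).trans (hL v (.head L))
    calc ‖apply_v.compFormalMultilinearSeries q.derivSeries n‖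
        ≤ ‖q.derivSeries n‖ := by
          refine (apply_v.norm_compContinuousMultilinearMap_le _).trans ?_
          exact mul_le_of_le_one_left (norm_nonneg _) hv
      _ ≤ (n + 1) * ‖q (n + 1)‖ := q.norm_derivSeries_le n
      _ ≤ (n + 1) * ((n + 1 + L.length).descFactorial L.length * ‖p (n + 1 + L.length)‖) := by
          gcongr; exact hq_le (n + 1)
      _ = (n + (v :: L).length).descFactorial (v :: L).length * ‖p (n + (v :: L).length)‖ := by
          rw [List.length_cons, ← add_assoc, add_right_comm n L.length 1, Nat.descFactorial_succ,
            Nat.add_sub_cancel]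
          push_cast; ring

theorem HasFPowerSeriesOnBall.norm_le_two_mul {f : E → F} {p : FormalMultilinearSeries 𝕜 E F}
    {x : E} {r : ℝ≥0∞} (h : HasFPowerSeriesOnBall f p x r) {y : E} (hy : y ∈ Metric.eball 0 r)
    {K : ℝ} (hK : ∀ n, ‖p n‖ * (2 * ‖y‖) ^ n ≤ K) : ‖f (x + y)‖ ≤ 2 * K := by
  have bound : ∀ n, ‖p n fun _ => y‖ ≤ K * (1 / 2) ^ n := fun n =>
    calc ‖p n fun _ => y‖ ≤ ‖p n‖ * ‖y‖ ^ n := by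
          simpa using (p n).le_opNorm_mul_prod_of_le (b := fun _ => ‖y‖) fun _ => le_rfl
      _ = ‖p n‖ * (2 * ‖y‖) ^ n * (1 / 2) ^ n := by
          rw [mul_assoc, ← mul_pow, mul_right_comm, mul_one_div_cancel two_ne_zero, one_mul]
      _ ≤ K * (1 / 2) ^ n := by gcongr; exact hK n
  have geom : HasSum (fun n : ℕ => K * (1 / 2) ^ n) (K * 2) := by
    simpa using hasSum_geometric_two.mul_left K
  exact ((h.hasSum hy).norm_le_of_bounded geom bound).trans_eq (mul_comm K 2)

theorem HasFPowerSeriesOnBall.norm_iteratedDirDeriv_le [CompleteSpace F] {f : E → F}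
    {p : FormalMultilinearSeries 𝕜 E F} {x : E} {ρ : ℝ≥0} (h : HasFPowerSeriesOnBall f p x ρ)
    (hρ : 0 < ρ) {C : ℝ} (hC : ∀ n, ‖p n‖ * (ρ : ℝ) ^ n ≤ C) {L : List E}
    (hL : ∀ v ∈ L, ‖v‖ ≤ 1) {y : E} (hy : ‖y‖ ≤ ρ / 4) :
    ‖iteratedDirDeriv 𝕜 L f (x + y)‖ ≤ 2 * (C * (2 / ρ) ^ L.length * L.length !) := by
  obtain ⟨q, hq, hq_le⟩ := h.exists_iteratedDirDeriv L hL
  set k := L.length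
  have hρ' : (0 : ℝ) < ρ := hρ
  have hy_mem : y ∈ Metric.eball (0 : E) ρ := by
    rw [Metric.mem_eball, edist_zero_right, enorm_eq_nnnorm, ENNReal.coe_lt_coe,
      ← NNReal.coe_lt_coe, coe_nnnorm]
    linarith
  refine hq.norm_le_two_mul hy_mem fun n => ?_
  calc ‖q n‖ * (2 * ‖y‖) ^ n ≤ (2 ^ (n + k) * k ! * ‖p (n + k)‖) * ((ρ : ℝ) / 2) ^ n := by
        gcongr
        · refine (hq_le n).trans ?_
          gcongr
          exact_mod_cast Nat.add_descFactorial_le n k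
        · linarith
    _ = (2 / ρ) ^ k * k ! * (‖p (n + k)‖ * ρ ^ (n + k)) := by
          rw [div_pow, div_pow, pow_add, pow_add]; field_simp
    _ ≤ (2 / ρ) ^ k * k ! * C := by gcongr; exact hC _
    _ = C * (2 / ρ) ^ k * k ! := by ring

theorem AnalyticAt.exists_norm_iteratedDirDeriv_le [CompleteSpace F] {f : E → F} {x : E}
    (h : AnalyticAt 𝕜 f x) :
    ∃ t ∈ 𝓝 x, ∃ B > 0, ∀ L : List E, (∀ v ∈ L, ‖v‖ ≤ 1) →
      ∀ y ∈ t, ‖iteratedDirDeriv 𝕜 L f y‖ ≤ B ^ (L.length + 1) * L.length ! := by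
  obtain ⟨p, r, hp⟩ := h
  obtain ⟨ρ, hρ0, hρr⟩ := ENNReal.lt_iff_exists_nnreal_btwn.1 hp.r_pos
  obtain ⟨C, -, hC⟩ := p.norm_mul_pow_le_of_lt_radius (hρr.trans_le hp.r_le)
  have hρ : 0 < ρ := ENNReal.coe_pos.1 hρ0
  set B := max (2 * C) (2 / ρ)
  refine ⟨Metric.closedBall x (ρ / 4), Metric.closedBall_mem_nhds x (by positivity), B,
    lt_max_of_lt_right (by positivity), fun L hL y hy => ?_⟩
  have key := (hp.mono hρ0 hρr.le).norm_iteratedDirDeriv_le hρ hC hL (y := y - x)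
    (by rwa [← dist_eq_norm, ← Metric.mem_closedBall])
  rw [add_sub_cancel] at key
  calc _ ≤ 2 * C * (2 / ρ) ^ L.length * L.length ! := key.trans_eq (by ring)
    _ ≤ B * B ^ L.length * L.length ! := by
        have : 0 ≤ B := le_max_of_le_right (by positivity)
        gcongr
        exacts [le_max_left _ _, le_max_right _ _]
    _ = B ^ (L.length + 1) * L.length ! := by ring

end IteratedDirDeriv

section Coordinates

variable {d : ℕ} {A : Type*} [NormedAddCommGroup A] [NormedSpace ℝ A]

noncomputable def coordDirs (α : Fin d → ℕ) : List (EuclideanSpace ℝ (Fin d)) :=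
  (List.finRange d).flatMap fun j => List.replicate (α j) (EuclideanSpace.single j 1)

theorem length_coordDirs (α : Fin d → ℕ) : (coordDirs α).length = ∑ i, α i := by
  simp [coordDirs, List.length_flatMap, Fin.sum_univ_def]

theorem norm_le_one_of_mem_coordDirs {α : Fin d → ℕ} {v : EuclideanSpace ℝ (Fin d)}
    (hv : v ∈ coordDirs α) : ‖v‖ ≤ 1 := by
  obtain ⟨j, -, hj⟩ := List.mem_flatMap.1 hv
  rw [List.eq_of_mem_replicate hj, PiLp.norm_single, norm_one]

theorem iterate_pd_eq_iteratedDirDeriv (j : Fin d) (n : ℕ) (f : EuclideanSpace ℝ (Fin d) → A) :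
    (pd j)^[n] f = iteratedDirDeriv ℝ (List.replicate n (EuclideanSpace.single j 1)) f := by
  induction n with
  | zero => rfl
  | succ n ih => rw [Function.iterate_succ_apply', ih]; rfl

theorem mpd_eq_iteratedDirDeriv (α : Fin d → ℕ) (f : EuclideanSpace ℝ (Fin d) → A) :
    mpd α f = iteratedDirDeriv ℝ (coordDirs α) f := by
  simp only [mpd, coordDirs, iteratedDirDeriv, List.foldr_flatMap, iterate_pd_eq_iteratedDirDeriv]

theorem AnalyticAt.exists_norm_mpd_le [CompleteSpace A] {u : EuclideanSpace ℝ (Fin d) → A}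
    {x : EuclideanSpace ℝ (Fin d)} (h : AnalyticAt ℝ u x) :
    ∃ t ∈ 𝓝 x, ∃ B > 0, ∀ α : Fin d → ℕ, ∀ y ∈ t,
      ‖mpd α u y‖ ≤ B ^ (∑ i, α i + 1) * ((∑ i, α i)! : ℝ) := by
  obtain ⟨t, ht, B, hB, hbound⟩ := h.exists_norm_iteratedDirDeriv_le
  refine ⟨t, ht, B, hB, fun α y hy => ?_⟩
  simpa only [mpd_eq_iteratedDirDeriv, length_coordDirs] using
    hbound (coordDirs α) (fun _ => norm_le_one_of_mem_coordDirs) y hy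

end Coordinates

theorem stmt_8_general {d : ℕ} {A : Type*} [NormedAddCommGroup A] [NormedSpace ℝ A]
    [CompleteSpace A] {O : Set (EuclideanSpace ℝ (Fin d))}
    {u : EuclideanSpace ℝ (Fin d) → A} (hu : AnalyticOnNhd ℝ u O)
    {K : Set (EuclideanSpace ℝ (Fin d))} (hK : IsCompact K) (hKO : K ⊆ O) :
    ∃ A₁ > (0 : ℝ), ∀ (α : Fin d → ℕ) (x : EuclideanSpace ℝ (Fin d)), x ∈ K →
      ‖mpd α u x‖ ≤ A₁ ^ (∑ i, α i + 1) * ∏ i, ((α i)! : ℝ) := by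
  obtain ⟨B, hB, hbound⟩ := hK.exists_forall_le_pow_mul (fun α x => ‖mpd α u x‖)
    (fun α => ∑ i, α i + 1) (fun α => ((∑ i, α i)! : ℝ)) (fun _ => by positivity)
    fun x hx => (hu x (hKO hx)).exists_norm_mpd_le
  refine ⟨(d + 1) * B, by positivity, fun α x hx => ?_⟩
  set k := ∑ i, α i
  have hfact : (k ! : ℝ) ≤ (d : ℝ) ^ k * ∏ i, ((α i)! : ℝ) := by
    exact_mod_cast (by simpa using Nat.factorial_sum_le_card_pow_mul_prod_factorial univ α)
  have hd : (d : ℝ) ^ k ≤ (d + 1) ^ (k + 1) :=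
    (pow_le_pow_left₀ (by positivity) (by linarith) k).trans
      (pow_le_pow_right₀ (by linarith [(d.cast_nonneg : (0 : ℝ) ≤ d)]) k.le_succ)
  calc ‖mpd α u x‖ ≤ B ^ (k + 1) * k ! := hbound α x hx
    _ ≤ B ^ (k + 1) * ((d + 1) ^ (k + 1) * ∏ i, ((α i)! : ℝ)) := by
        gcongr
        exact hfact.trans (mul_le_mul_of_nonneg_right hd (by positivity))
    _ = ((d + 1) * B) ^ (k + 1) * ∏ i, ((α i)! : ℝ) := by rw [mul_pow]; ring

/-- If `u : O → 𝒜` is real-analytic on the open set `O ⊆ ℝ^d`, then on every compact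
`K ⊆ O` the derivatives satisfy `‖∂^α u(x)‖ ≤ A₁^(|α|+1) · α!` for some `A₁ > 0`. -/
theorem stmt_8 {d : ℕ} {A : Type*} [NormedAddCommGroup A] [NormedSpace ℝ A]
    [CompleteSpace A] {O : Set (EuclideanSpace ℝ (Fin d))} (hO : IsOpen O)
    {u : EuclideanSpace ℝ (Fin d) → A} (hu : AnalyticOnNhd ℝ u O)
    {K : Set (EuclideanSpace ℝ (Fin d))} (hK : IsCompact K) (hKO : K ⊆ O) :
    ∃ A₁ > (0 : ℝ), ∀ (α : Fin d → ℕ) (x : EuclideanSpace ℝ (Fin d)), x ∈ K →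
      ‖mpd α u x‖ ≤ A₁ ^ (∑ i, α i + 1) * ∏ i, ((α i)! : ℝ) :=
  stmt_8_general hu hK hKO
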